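/- Fix λ_1,…,λ_{m−1} ∈ ℂ and R_1,…,R_{m−1} > 0 such that S = {z ∈ ℂ : |z| ≤ 1 and |z − λ_j| ≥ R_j for j = 1,…,m−1} is nonempty. For every finitely supported family of complex coefficients p = (p_{kl}) and every ε > 0 there exists C(p,ε) ≥ 0 such that: for every unital C*-algebra A, every δ ≥ 0, and every a ∈ A with ‖a‖ ≤ 1, ‖a a* − a* a‖ ≤ δ, and each a − λ_j·1 invertible with ‖(a − λ_j·1)^{−1}‖ ≤ R_j^{−1}, one has ‖Im p(a,a*)‖ ≤ max_{z∈S} |Im p(z,z̄)| + ε + C(p,ε)·δ, where Im b = (b − b*)/(2i) for b ∈ A and Im w denotes the imaginary part of w ∈ ℂ. -/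

import Mathlib

open scoped ComplexConjugate

/-- Evaluation of a finitely supported coefficient family `p = (p_{kl})` at an element `a`
of a star `ℂ`-algebra: `p(a,a*) = ∑ p_{kl} a^k (a*)^l`. -/
noncomputable def polyEvalA {A : Type*} [Ring A] [StarRing A] [Algebra ℂ A]
    (p : (ℕ × ℕ) →₀ ℂ) (a : A) : A :=
  p.sum fun kl c => c • (a ^ kl.1 * star a ^ kl.2)

/-- The function `z ↦ p(z, z̄) = ∑ p_{kl} z^k conj(z)^l`. -/
noncomputable def polyEvalC (p : (ℕ × ℕ) →₀ ℂ) (z : ℂ) : ℂ :=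
  p.sum fun kl c => c * z ^ kl.1 * (conj z) ^ kl.2

/-
If no constant works, the choice `C = n` yields for each `n` a C⋆-algebra `Aₙ` and an element `aₙ`
violating the bound with defect `δₙ`; since `‖Im p(aₙ, aₙ*)‖` is bounded independently of `n`,
`δₙ → 0`. The sequence `(aₙ)` defines an element `b` of the asymptotic algebra
`ℓ^∞(Aₙ) / c₀(Aₙ)`, a C⋆-algebra in which `‖[x]‖ = limsup ‖xₙ‖`. There `b` is normal and the
uniform resolvent bounds keep its spectrum inside `S`, so the continuous functional calculus gives
`‖Im p(b, b*)‖ ≤ max_S |Im p|`, whereas the limsup formula gives `‖Im p(b, b*)‖ ≥ max_S |Im p| + ε`.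
-/

open Filter Topology ComplexStarModule
open scoped ENNReal

lemma inv_two_mul_I_smul_sub_star_eq_imaginaryPart {A : Type*} [AddCommGroup A] [Module ℂ A]
    [StarAddMonoid A] [StarModule ℂ A] (x : A) : ((2 * Complex.I)⁻¹ : ℂ) • (x - star x) = ℑ x := by
  rw [imaginaryPart_apply_coe, ← Complex.coe_smul, smul_smul]
  congr 1
  field_simp
  simp

section PolyEval

variable (p : (ℕ × ℕ) →₀ ℂ)

lemma map_polyEvalA {A B F : Type*} [Ring A] [StarRing A] [Algebra ℂ A] [Ring B] [StarRing B]
    [Algebra ℂ B] [FunLike F A B] [AlgHomClass F ℂ A B] [StarHomClass F A B] (φ : F) (a : A) :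
    φ (polyEvalA p a) = polyEvalA p (φ a) := by
  simp only [polyEvalA, Finsupp.sum, map_sum, map_smul, map_mul, map_pow, map_star]

lemma norm_polyEvalA_le {A : Type*} [NormedRing A] [StarRing A] [NormedStarGroup A]
    [NormedAlgebra ℂ A] [NormOneClass A] {a : A} (ha : ‖a‖ ≤ 1) :
    ‖polyEvalA p a‖ ≤ ∑ kl ∈ p.support, ‖p kl‖ := by
  have hpow (b : A) (hb : ‖b‖ ≤ 1) (k : ℕ) : ‖b ^ k‖ ≤ 1 :=
    (norm_pow_le b k).trans (pow_le_one₀ (norm_nonneg b) hb)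
  refine (norm_sum_le _ _).trans (Finset.sum_le_sum fun kl _ => ?_)
  rw [norm_smul]
  refine mul_le_of_le_one_right (norm_nonneg _) ((norm_mul_le _ _).trans ?_)
  exact mul_le_one₀ (hpow a ha _) (norm_nonneg _) (hpow _ (by rwa [norm_star]) _)

lemma polyEvalC_eq_sum :
    polyEvalC p = ∑ kl ∈ p.support, fun z => p kl • (z ^ kl.1 * star z ^ kl.2) := by
  ext z
  simp [polyEvalC, Finsupp.sum, mul_assoc]

@[fun_prop]
lemma continuous_polyEvalC : Continuous (polyEvalC p) := by
  unfold polyEvalC Finsupp.sum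
  fun_prop

variable {A : Type*} [CStarAlgebra A] (a : A) [IsStarNormal a]

lemma polyEvalA_eq_cfc : polyEvalA p a = cfc (polyEvalC p) a := by
  rw [polyEvalC_eq_sum, cfc_sum .., polyEvalA, Finsupp.sum]
  refine Finset.sum_congr rfl fun kl _ => ?_
  rw [cfc_smul .., cfc_mul .., cfc_pow_id .., cfc_pow .., cfc_star_id ..]

lemma norm_imaginaryPart_polyEvalA_le {S : Set ℂ} (hS : spectrum ℂ a ⊆ S) {M : ℝ} (hM0 : 0 ≤ M)
    (hM : ∀ z ∈ S, |(polyEvalC p z).im| ≤ M) : ‖(ℑ (polyEvalA p a) : A)‖ ≤ M := by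
  rw [polyEvalA_eq_cfc, ← cfc_im_id _ (IsStarNormal.cfc_map ..), ← cfc_comp' ..]
  refine norm_cfc_le hM0 fun z hz => ?_
  simpa using hM z (hS hz)

end PolyEval

lemma le_norm_sub_of_mem_spectrum {A : Type*} [NormedRing A] [NormedAlgebra ℂ A] [CompleteSpace A]
    [NormOneClass A] {a : A} {μ : ℂ} {u : Aˣ} (hu : (u : A) = a - algebraMap ℂ A μ) {r : ℝ}
    (hr : ‖(↑u⁻¹ : A)‖ ≤ r⁻¹) {z : ℂ} (hz : z ∈ spectrum ℂ a) : r ≤ ‖z - μ‖ := by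
  rcases le_or_gt r 0 with hr0 | hr0
  · exact hr0.trans (norm_nonneg _)
  have hzu : z - μ ∈ spectrum ℂ (u : A) := by
    rw [hu, ← spectrum.sub_singleton_eq]
    exact Set.sub_mem_sub hz rfl
  have hz0 : z - μ ≠ 0 := fun h => spectrum.zero_notMem ℂ u.isUnit (h ▸ hzu)
  have hzu' : (z - μ)⁻¹ ∈ spectrum ℂ (↑u⁻¹ : A) := by
    rw [← spectrum.map_inv]
    exact Set.inv_mem_inv.mpr hzu
  have := (spectrum.norm_le_norm_of_mem hzu').trans hr
  rwa [norm_inv, inv_le_inv₀ (norm_pos_iff.mpr hz0) hr0] at this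

lemma nontrivial_of_mem_spectrum {R A : Type*} [CommSemiring R] [Ring A] [Algebra R A] {a : A}
    {r : R} (h : r ∈ spectrum R a) : Nontrivial A :=
  not_subsingleton_iff_nontrivial.mp fun _ => by simp [spectrum.of_subsingleton] at h

lemma limsup_mul_self {ι : Type*} {f : Filter ι} [f.NeBot] {u : ι → ℝ} (hu : ∀ i, 0 ≤ u i)
    (hbdd : IsBoundedUnder (· ≤ ·) f u) :
    limsup u f * limsup u f = limsup (fun i => u i * u i) f := by
  have hmono : Monotone fun t : ℝ => max t 0 * max t 0 := fun s t hst =>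
    mul_self_le_mul_self (le_max_right _ _) (max_le_max_right 0 hst)
  have h := hmono.map_limsup_of_continuousAt u (by fun_prop) hbdd
    (isCoboundedUnder_le_of_le f hu)
  have h0 : 0 ≤ limsup u f := le_limsup_of_frequently_le (.of_forall hu) hbdd
  simpa [Function.comp_def, max_eq_left h0, max_eq_left (hu _)] using h

lemma tendsto_zero_of_forall_natCast_mul_le {δ : ℕ → ℝ} {K : ℝ} (h0 : ∀ n, 0 ≤ δ n)
    (hK : ∀ n : ℕ, n * δ n ≤ K) : Tendsto δ atTop (𝓝 0) := by
  refine squeeze_zero' (.of_forall h0) ?_ (tendsto_const_div_atTop_nhds_zero_nat K)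
  filter_upwards [eventually_ge_atTop 1] with n hn
  rw [le_div_iff₀ (by exact_mod_cast hn), mul_comm]
  exact hK n

noncomputable section

namespace lp

section Bounded

variable {E : ℕ → Type*} [∀ n, NormedAddCommGroup (E n)]

lemma isBoundedUnder_norm_apply (x : lp E ∞) : IsBoundedUnder (· ≤ ·) atTop (fun n => ‖x n‖) :=
  isBoundedUnder_of ⟨‖x‖, norm_apply_le_norm ENNReal.top_ne_zero x⟩

lemma isCoboundedUnder_norm_apply (x : lp E ∞) :
    IsCoboundedUnder (· ≤ ·) atTop (fun n => ‖x n‖) :=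
  isCoboundedUnder_le_of_le atTop fun n => norm_nonneg (x n)

lemma limsup_norm_nonneg (x : lp E ∞) : 0 ≤ limsup (fun n => ‖x n‖) atTop :=
  le_limsup_of_frequently_le (.of_forall fun _ => norm_nonneg _) (isBoundedUnder_norm_apply x)

end Bounded

variable {A : ℕ → Type*} [∀ n, CStarAlgebra (A n)] [∀ n, Nontrivial (A n)]

variable (A) in
def evalStarAlgHom (n : ℕ) : lp A ∞ →⋆ₐ[ℂ] A n where
  toFun x := x n
  map_one' := congrFun infty_coeFn_one n
  map_mul' x y := congrFun (infty_coeFn_mul x y) n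
  map_zero' := rfl
  map_add' _ _ := rfl
  commutes' _ := rfl
  map_star' _ := rfl

lemma exists_unit_of_norm_inverse_le {x : lp A ∞} (hx : ∀ n, IsUnit (x n)) {C : ℝ}
    (hC : ∀ n, ‖Ring.inverse (x n)‖ ≤ C) :
    ∃ u : (lp A ∞)ˣ, (u : lp A ∞) = x ∧ ‖(↑u⁻¹ : lp A ∞)‖ ≤ C := by
  let y : lp A ∞ := ⟨fun n => Ring.inverse (x n), memℓp_infty ⟨C, by rintro _ ⟨n, rfl⟩; exact hC n⟩⟩
  refine ⟨⟨x, y, ?_, ?_⟩, rfl, norm_le_of_forall_le' C hC⟩ <;> ext n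
  · exact Ring.mul_inverse_cancel _ (hx n)
  · exact Ring.inverse_mul_cancel _ (hx n)

variable (A) in
def zeroAtInftyIdeal : Ideal (lp A ∞) where
  carrier := {x | Tendsto (fun n => ‖x n‖) atTop (𝓝 0)}
  zero_mem' := by simp
  add_mem' {x y} hx hy := squeeze_zero (fun n => norm_nonneg _) (fun n => norm_add_le (x n) (y n))
    (by simpa using hx.add hy)
  smul_mem' c x hx := squeeze_zero (fun n => norm_nonneg _)
    (fun n => (norm_mul_le (c n) (x n)).trans (mul_le_mul_of_nonneg_right
      (norm_apply_le_norm ENNReal.top_ne_zero c n) (norm_nonneg _)))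
    (by simpa using hx.const_mul ‖c‖)

lemma mem_zeroAtInftyIdeal {x : lp A ∞} :
    x ∈ zeroAtInftyIdeal A ↔ Tendsto (fun n => ‖x n‖) atTop (𝓝 0) := Iff.rfl

instance : (zeroAtInftyIdeal A).IsTwoSided where
  mul_mem_of_left {x} c hx := squeeze_zero (fun n => norm_nonneg _)
    (fun n => (norm_mul_le (x n) (c n)).trans (mul_le_mul_of_nonneg_left
      (norm_apply_le_norm ENNReal.top_ne_zero c n) (norm_nonneg _)))
    (by simpa using hx.mul_const ‖c‖)

lemma star_mem_zeroAtInftyIdeal {x : lp A ∞} (hx : x ∈ zeroAtInftyIdeal A) :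
    star x ∈ zeroAtInftyIdeal A := by
  simpa [mem_zeroAtInftyIdeal] using hx

instance : IsClosed (zeroAtInftyIdeal A : Set (lp A ∞)) := by
  refine isClosed_of_closure_subset fun x hx => ?_
  rw [SetLike.mem_coe, mem_zeroAtInftyIdeal, NormedAddGroup.tendsto_nhds_zero]
  intro ε hε
  obtain ⟨y, hy, hxy⟩ := Metric.mem_closure_iff.mp hx (ε / 2) (half_pos hε)
  filter_upwards [NormedAddGroup.tendsto_nhds_zero.mp hy (ε / 2) (half_pos hε)] with n hn
  have := norm_apply_le_norm ENNReal.top_ne_zero (x - y) n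
  rw [dist_eq_norm] at hxy
  simp only [norm_norm] at hn ⊢
  calc ‖x n‖ ≤ ‖(x - y) n‖ + ‖y n‖ := by simpa using norm_le_norm_sub_add (x n) (y n)
    _ < ε := by linarith

variable (A) in
abbrev AsymptoticAlgebra := lp A ∞ ⧸ zeroAtInftyIdeal A

namespace AsymptoticAlgebra

variable (A) in
abbrev mk : lp A ∞ →ₐ[ℂ] AsymptoticAlgebra A := Ideal.Quotient.mkₐ ℂ _

lemma mk_surjective : Function.Surjective (mk A) := Ideal.Quotient.mkₐ_surjective ℂ _

lemma mk_eq_mk_iff {x y : lp A ∞} : mk A x = mk A y ↔ x - y ∈ zeroAtInftyIdeal A :=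
  Ideal.Quotient.eq

lemma norm_mk_le (x : lp A ∞) : ‖mk A x‖ ≤ ‖x‖ := Submodule.Quotient.norm_mk_le _ x

instance : Star (AsymptoticAlgebra A) where
  star := Quotient.map' star fun x y h => by
    rw [Submodule.quotientRel_def] at h ⊢
    simpa [star_sub] using star_mem_zeroAtInftyIdeal h

lemma mk_star (x : lp A ∞) : mk A (star x) = star (mk A x) := rfl

instance : StarRing (AsymptoticAlgebra A) where
  star_involutive := mk_surjective.forall.mpr fun x => by rw [← mk_star, ← mk_star, star_star]
  star_mul := mk_surjective.forall₂.mpr fun x y => by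
    rw [← map_mul, ← mk_star, ← mk_star, ← mk_star, star_mul, map_mul]
  star_add := mk_surjective.forall₂.mpr fun x y => by
    rw [← map_add, ← mk_star, ← mk_star, ← mk_star, star_add, map_add]

instance : StarModule ℂ (AsymptoticAlgebra A) where
  star_smul c := mk_surjective.forall.mpr fun x => by
    rw [← map_smul, ← mk_star, ← mk_star, star_smul, map_smul]

lemma limsup_norm_le_of_sub_mem {x y : lp A ∞} (h : x - y ∈ zeroAtInftyIdeal A) :
    limsup (fun n => ‖x n‖) atTop ≤ ‖y‖ := by
  refine le_of_forall_pos_le_add fun η hη => limsup_le_of_le (isCoboundedUnder_norm_apply x) ?_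
  filter_upwards [(mem_zeroAtInftyIdeal.mp h).eventually (gt_mem_nhds hη)] with n hn
  calc ‖x n‖ ≤ ‖y n‖ + ‖x n - y n‖ := norm_le_norm_add_norm_sub' _ _
    _ ≤ ‖y‖ + η := add_le_add (norm_apply_le_norm ENNReal.top_ne_zero y n) hn.le

lemma norm_mk (x : lp A ∞) : ‖mk A x‖ = limsup (fun n => ‖x n‖) atTop := by
  apply le_antisymm
  · refine le_of_forall_pos_le_add fun η hη => ?_
    obtain ⟨N, hN⟩ := eventually_atTop.mp <|
      eventually_lt_of_limsup_lt (lt_add_of_pos_right _ hη) (isBoundedUnder_norm_apply x)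
    let y : lp A ∞ := ⟨fun n => if N ≤ n then x n else 0,
      (lp.memℓp x).mono' fun n => by split_ifs <;> simp⟩
    have hxy : x - y ∈ zeroAtInftyIdeal A := by
      refine tendsto_const_nhds.congr' ?_
      filter_upwards [eventually_ge_atTop N] with n hn
      rw [coeFn_sub, Pi.sub_apply]
      simp [y, hn]
    calc ‖mk A x‖ = ‖mk A y‖ := by rw [mk_eq_mk_iff.mpr hxy]
      _ ≤ ‖y‖ := norm_mk_le y
      _ ≤ _ := norm_le_of_forall_le' _ fun n => by
        by_cases hn : N ≤ n
        · simpa [y, hn] using (hN n hn).le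
        · simpa [y, hn] using add_nonneg (limsup_norm_nonneg x) hη.le
  · refine le_of_forall_pos_le_add fun η hη => ?_
    obtain ⟨y, hy, hyx⟩ := Submodule.Quotient.norm_mk_lt (mk A x) hη
    exact (limsup_norm_le_of_sub_mem (mk_eq_mk_iff.mp hy.symm)).trans hyx.le

instance : NormedRing (AsymptoticAlgebra A) where
  dist_eq := dist_eq_norm_neg_add
  norm_mul_le := mk_surjective.forall₂.mpr fun x y => by
    have hx := isBoundedUnder_norm_apply x
    have hy := isBoundedUnder_norm_apply y
    have hx0 : ∀ᶠ n in atTop, 0 ≤ ‖x n‖ := .of_forall fun _ => norm_nonneg _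
    have hy0 : ∀ᶠ n in atTop, 0 ≤ ‖y n‖ := .of_forall fun _ => norm_nonneg _
    rw [← map_mul, norm_mk, norm_mk, norm_mk]
    calc limsup (fun n => ‖(x * y) n‖) atTop ≤ limsup (fun n => ‖x n‖ * ‖y n‖) atTop :=
          limsup_le_limsup (.of_forall fun n => norm_mul_le (x n) (y n))
            (isCoboundedUnder_norm_apply _)
            (isBoundedUnder_le_mul_of_nonneg hx0.frequently hx hy0 hy)
      _ ≤ _ := limsup_mul_le hx0.frequently hx hy0 hy

instance : CStarRing (AsymptoticAlgebra A) where
  norm_mul_self_le := mk_surjective.forall.mpr fun x => by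
    simp only [← mk_star, ← map_mul, norm_mk, infty_coeFn_mul, Pi.mul_apply]
    rw [limsup_mul_self (fun _ => norm_nonneg _) (isBoundedUnder_norm_apply x)]
    simp only [lp.star_apply, CStarRing.norm_star_mul_self, le_refl]

instance : NormedAlgebra ℂ (AsymptoticAlgebra A) where
  norm_smul_le := norm_smul_le

instance : CStarAlgebra (AsymptoticAlgebra A) where

variable (A) in
def mkStarAlgHom : lp A ∞ →⋆ₐ[ℂ] AsymptoticAlgebra A :=
  { mk A with map_star' _ := rfl }

lemma isStarNormal_mk {x : lp A ∞}
    (hx : Tendsto (fun n => ‖x n * star (x n) - star (x n) * x n‖) atTop (𝓝 0)) :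
    IsStarNormal (mk A x) where
  star_comm_self := by
    rw [commute_iff_eq, ← mk_star, ← map_mul, ← map_mul, mk_eq_mk_iff, mem_zeroAtInftyIdeal]
    simpa only [coeFn_sub, Pi.sub_apply, infty_coeFn_mul, Pi.mul_apply, lp.star_apply,
      norm_sub_rev] using hx

lemma le_norm_sub_of_mem_spectrum_mk {x : lp A ∞} {μ : ℂ} {r : ℝ}
    (hunit : ∀ n, IsUnit (x n - algebraMap ℂ (A n) μ))
    (hinv : ∀ n, ‖Ring.inverse (x n - algebraMap ℂ (A n) μ)‖ ≤ r⁻¹) {z : ℂ}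
    (hz : z ∈ spectrum ℂ (mk A x)) : r ≤ ‖z - μ‖ := by
  have := nontrivial_of_mem_spectrum hz
  obtain ⟨u, hu, hu'⟩ := exists_unit_of_norm_inverse_le (x := x - algebraMap ℂ (lp A ∞) μ)
    hunit hinv
  let v : (AsymptoticAlgebra A)ˣ := ⟨mk A u, mk A ↑u⁻¹, by rw [← map_mul, u.mul_inv, map_one],
    by rw [← map_mul, u.inv_mul, map_one]⟩
  exact le_norm_sub_of_mem_spectrum (u := v) (by rw [Units.val_mk, hu, map_sub, AlgHom.commutes])
    ((norm_mk_le _).trans hu') hz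

end AsymptoticAlgebra

end lp

end

open lp lp.AsymptoticAlgebra in
theorem limsup_norm_imaginaryPart_polyEvalA_le {A : ℕ → Type*} [∀ n, CStarAlgebra (A n)]
    [∀ n, Nontrivial (A n)] {m : ℕ} {lam : Fin m → ℂ} {R : Fin m → ℝ} (p : (ℕ × ℕ) →₀ ℂ) {M : ℝ}
    (hM0 : 0 ≤ M) (hM : ∀ z ∈ {z : ℂ | ‖z‖ ≤ 1 ∧ ∀ j, R j ≤ ‖z - lam j‖}, |(polyEvalC p z).im| ≤ M)
    (a : ∀ n, A n) (ha : ∀ n, ‖a n‖ ≤ 1)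
    (hcomm : Tendsto (fun n => ‖a n * star (a n) - star (a n) * a n‖) atTop (𝓝 0))
    (hunit : ∀ n j, IsUnit (a n - algebraMap ℂ (A n) (lam j)))
    (hinv : ∀ n j, ‖Ring.inverse (a n - algebraMap ℂ (A n) (lam j))‖ ≤ (R j)⁻¹) :
    limsup (fun n => ‖(ℑ (polyEvalA p (a n)) : A n)‖) atTop ≤ M := by
  let x : lp A ∞ := ⟨a, memℓp_infty ⟨1, by rintro _ ⟨n, rfl⟩; exact ha n⟩⟩
  have : IsStarNormal (mk A x) := isStarNormal_mk hcomm
  have hspec : spectrum ℂ (mk A x) ⊆ {z : ℂ | ‖z‖ ≤ 1 ∧ ∀ j, R j ≤ ‖z - lam j‖} := fun z hz =>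
    have := nontrivial_of_mem_spectrum hz
    ⟨(spectrum.norm_le_norm_of_mem hz).trans
      ((norm_mk_le x).trans (norm_le_of_forall_le zero_le_one ha)),
      fun j => le_norm_sub_of_mem_spectrum_mk (hunit · j) (hinv · j) hz⟩
  calc limsup (fun n => ‖(ℑ (polyEvalA p (a n)) : A n)‖) atTop
      = ‖mk A (ℑ (polyEvalA p x))‖ := by
        rw [norm_mk]
        congr! with n
        change _ = evalStarAlgHom A n (ℑ (polyEvalA p x) : lp A ∞)
        rw [map_imaginaryPart, map_polyEvalA p (evalStarAlgHom A n)]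
        rfl
    _ = ‖(ℑ (polyEvalA p (mk A x)) : AsymptoticAlgebra A)‖ := by
        change ‖mkStarAlgHom A _‖ = _
        rw [map_imaginaryPart, map_polyEvalA p (mkStarAlgHom A)]
        rfl
    _ ≤ M := norm_imaginaryPart_polyEvalA_le p _ hspec hM0 hM

theorem stmt5.{u} (m : ℕ) (lam : Fin m → ℂ) (R : Fin m → ℝ) (hR : ∀ j, 0 < R j)
    (S : Set ℂ) (hS : S = {z : ℂ | ‖z‖ ≤ 1 ∧ ∀ j, R j ≤ ‖z - lam j‖})
    (hSne : S.Nonempty)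
    (p : (ℕ × ℕ) →₀ ℂ) (ε : ℝ) (hε : 0 < ε) :
    ∃ C : ℝ, 0 ≤ C ∧
      ∀ (A : Type u) [CStarAlgebra A], ∀ δ : ℝ, 0 ≤ δ →
        ∀ a : A, ‖a‖ ≤ 1 → ‖a * star a - star a * a‖ ≤ δ →
          (∀ j, IsUnit (a - algebraMap ℂ A (lam j))) →
          (∀ j, ‖Ring.inverse (a - algebraMap ℂ A (lam j))‖ ≤ (R j)⁻¹) →
            ‖((2 * Complex.I)⁻¹ : ℂ) • (polyEvalA p a - star (polyEvalA p a))‖ ≤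
              sSup ((fun z => |(polyEvalC p z).im|) '' S) + ε + C * δ := by
  subst hS
  set M := sSup ((fun z => |(polyEvalC p z).im|) '' {z : ℂ | ‖z‖ ≤ 1 ∧ ∀ j, R j ≤ ‖z - lam j‖})
  have hM z (hz : z ∈ {z : ℂ | ‖z‖ ≤ 1 ∧ ∀ j, R j ≤ ‖z - lam j‖}) : |(polyEvalC p z).im| ≤ M :=
    le_csSup (((isCompact_closedBall (0 : ℂ) 1).image (by fun_prop)).bddAbove.mono
      (Set.image_mono fun z hz => mem_closedBall_zero_iff.mpr hz.1)) ⟨z, hz, rfl⟩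
  have hM0 : 0 ≤ M := Real.sSup_nonneg (by rintro _ ⟨z, -, rfl⟩; positivity)
  simp_rw [inv_two_mul_I_smul_sub_star_eq_imaginaryPart]
  by_contra! h
  choose A _ δ hδ a ha hcomm hunit hinv hlt using fun n : ℕ => h n n.cast_nonneg
  have hlow n : M + ε ≤ ‖(ℑ (polyEvalA p (a n)) : A n)‖ := by
    nlinarith [hlt n, hδ n, (n.cast_nonneg : (0 : ℝ) ≤ n)]
  have (n : ℕ) : Nontrivial (A n) :=
    nontrivial_of_ne _ 0 (norm_pos_iff.mp ((by linarith : 0 < M + ε).trans_le (hlow n)))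
  set K := ∑ kl ∈ p.support, ‖p kl‖
  have hK n : ‖(ℑ (polyEvalA p (a n)) : A n)‖ ≤ K :=
    (imaginaryPart.norm_le _).trans (norm_polyEvalA_le p (ha n))
  have hδ0 : Tendsto δ atTop (𝓝 0) :=
    tendsto_zero_of_forall_natCast_mul_le (K := K) hδ fun n => by linarith [hlt n, hK n]
  have hle := limsup_norm_imaginaryPart_polyEvalA_le p hM0 hM a ha
    (squeeze_zero (fun _ => norm_nonneg _) hcomm hδ0) hunit hinv
  have hge := le_limsup_of_frequently_le (.of_forall (f := atTop) hlow) (isBoundedUnder_of ⟨K, hK⟩)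
  linarith
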